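/- In 2-dimensional Minkowski space the volume-distance relation holds: for a = (0,0) ≤ c = (t,x) with t ≥ |x|, the Lebesgue measure of the causal diamond J(a,c) equals (t² − x²)/2, i.e. vol(J(a,c)) = σ(a,c)²/2 where σ(a,c) = √(t² − x²) is the Lorentzian distance. -/

import Mathlib

/-!
In the null coordinates `u = t - x`, `v = t + x` the causal order becomes the product order, so a
causal diamond is the preimage of a rectangle under a linear map of determinant `2`.  Its area is
therefore half the product of the side lengths, `(Δt - Δx)(Δt + Δx) / 2`.
-/

open MeasureTheory

/-- Causal order on 2-dimensional Minkowski space, coordinates `(t, x)`. -/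
def MinkLE (p q : ℝ × ℝ) : Prop := |q.2 - p.2| ≤ q.1 - p.1

/-- Causal diamond `J(p,q)`. -/
def MinkJ (p q : ℝ × ℝ) : Set (ℝ × ℝ) := {z | MinkLE p z ∧ MinkLE z q}

noncomputable def nullCoords : (ℝ × ℝ) →ₗ[ℝ] (ℝ × ℝ) :=
  LinearMap.prod (LinearMap.fst ℝ ℝ ℝ - LinearMap.snd ℝ ℝ ℝ)
    (LinearMap.fst ℝ ℝ ℝ + LinearMap.snd ℝ ℝ ℝ)

@[simp]
lemma nullCoords_apply (z : ℝ × ℝ) : nullCoords z = (z.1 - z.2, z.1 + z.2) := rfl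

lemma nullCoords_det : nullCoords.det = 2 := by
  rw [← LinearMap.det_toMatrix (Module.Basis.finTwoProd ℝ), Matrix.det_fin_two]
  simp [LinearMap.toMatrix_apply, Module.Basis.finTwoProd]
  norm_num

lemma minkLE_iff_nullCoords_le (p q : ℝ × ℝ) : MinkLE p q ↔ nullCoords p ≤ nullCoords q := by
  simp only [MinkLE, nullCoords_apply, Prod.mk_le_mk, abs_le]
  constructor <;> rintro ⟨h₁, h₂⟩ <;> constructor <;> linarith

lemma minkJ_eq_preimage_Icc (p q : ℝ × ℝ) :
    MinkJ p q = nullCoords ⁻¹' Set.Icc (nullCoords p) (nullCoords q) := by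
  ext z
  simp [MinkJ, minkLE_iff_nullCoords_le]

lemma volume_minkJ {p q : ℝ × ℝ} (h : MinkLE p q) :
    volume (MinkJ p q) = ENNReal.ofReal (((q.1 - p.1) ^ 2 - (q.2 - p.2) ^ 2) / 2) := by
  obtain ⟨hu, hv⟩ := (minkLE_iff_nullCoords_le p q).1 h
  simp only [nullCoords_apply] at hu hv
  rw [minkJ_eq_preimage_Icc, Measure.addHaar_preimage_linearMap volume (by simp [nullCoords_det]),
    nullCoords_det, ← Set.Icc_prod_Icc, Measure.volume_eq_prod, Measure.prod_prod,
    Real.volume_Icc, Real.volume_Icc]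
  simp only [nullCoords_apply, abs_inv, abs_two]
  rw [← ENNReal.ofReal_mul (by linarith), ← ENNReal.ofReal_mul (by positivity)]
  congr 1
  ring

/-- Volume–distance relation in 2-dimensional Minkowski space:
`vol J((0,0),(t,x)) = (t² − x²)/2 = σ((0,0),(t,x))²/2`. -/
theorem diamond_volume_eq_sigma_sq_div_two (t x : ℝ) (h : |x| ≤ t) :
    volume (MinkJ (0, 0) (t, x)) = ENNReal.ofReal ((t ^ 2 - x ^ 2) / 2) ∧
    (t ^ 2 - x ^ 2) / 2 = Real.sqrt (t ^ 2 - x ^ 2) ^ 2 / 2 := by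
  have hle : MinkLE (0, 0) (t, x) := by simpa [MinkLE] using h
  have hx_sq : x ^ 2 ≤ t ^ 2 := sq_le_sq.2 (h.trans (le_abs_self t))
  refine ⟨by simpa using volume_minkJ hle, ?_⟩
  rw [Real.sq_sqrt (sub_nonneg.2 hx_sq)]
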